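/- For n ≥ 2, there is a bijection between Π_{n-1} and Ω_n; in particular |Π_{n-1}| = |Ω_n|. -/

import Mathlib

open Matrix

/-- A lattice point in the plane. -/
abbrev Pt := ℤ × ℤ

/-- The points visited by a path starting at `p` taking steps `l`. -/
def pts (p : Pt) (l : List Pt) : List Pt := l.scanl (· + ·) p

/-- The endpoint of a path starting at `p` taking steps `l`. -/
def endpt (p : Pt) (l : List Pt) : Pt := l.foldl (· + ·) p

/-- `l` is the step list of a large Schröder path from `p` to `q`:
steps are U=(1,1), D=(1,-1), L=(2,0) and the path never goes below the x-axis. -/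
def IsLargePath (p q : Pt) (l : List Pt) : Prop :=
  (∀ s ∈ l, s = (1, 1) ∨ s = (1, -1) ∨ s = (2, 0)) ∧
  (∀ v ∈ pts p l, 0 ≤ v.2) ∧
  endpt p l = q

/-- A small Schröder path: a large Schröder path with no level step on the x-axis. -/
def IsSmallPath (p q : Pt) (l : List Pt) : Prop :=
  IsLargePath p q l ∧
  ∀ (i : ℕ) (h : i < l.length), l.get ⟨i, h⟩ = (2, 0) → (endpt p (l.take i)).2 ≠ 0

/-- The `k`-th large Schröder number: the number of large Schröder paths
from `(0,0)` to `(2k,0)`. -/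
noncomputable def schR (k : ℕ) : ℕ := Nat.card {l : List Pt // IsLargePath (0, 0) (2 * k, 0) l}

/-- The `k`-th small Schröder number: the number of small Schröder paths
from `(0,0)` to `(2k,0)`. -/
noncomputable def schS (k : ℕ) : ℕ := Nat.card {l : List Pt // IsSmallPath (0, 0) (2 * k, 0) l}

/-- `Π n`: `n`-tuples of pairwise non-intersecting large Schröder paths where the
`i`-th path (1-indexed; here index `i : Fin n` stands for `i+1`) runs from
`(-2(i+1)+1, 0)` to `(2(i+1)-1, 0)`. -/
def PiSet (n : ℕ) : Set (Fin n → List Pt) :=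
  {π | (∀ i : Fin n, IsLargePath (-(2 * (i : ℤ) + 1), 0) (2 * (i : ℤ) + 1, 0) (π i)) ∧
    ∀ i j : Fin n, i ≠ j → ∀ v ∈ pts (-(2 * (i : ℤ) + 1), 0) (π i),
      v ∉ pts (-(2 * (j : ℤ) + 1), 0) (π j)}

/-- `Ω n`: the analogous tuples of small Schröder paths. -/
def OmegaSet (n : ℕ) : Set (Fin n → List Pt) :=
  {ω | (∀ i : Fin n, IsSmallPath (-(2 * (i : ℤ) + 1), 0) (2 * (i : ℤ) + 1, 0) (ω i)) ∧
    ∀ i j : Fin n, i ≠ j → ∀ v ∈ pts (-(2 * (i : ℤ) + 1), 0) (ω i),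
      v ∉ pts (-(2 * (j : ℤ) + 1), 0) (ω j)}

/-- `Π* n`: `n`-tuples `(μ₀,…,μ_{n-1})` of pairwise non-intersecting large Schröder
paths with `μ i` from `(-2i,0)` to `(2i,0)`. -/
def PiStarSet (n : ℕ) : Set (Fin n → List Pt) :=
  {μ | (∀ i : Fin n, IsLargePath (-(2 * (i : ℤ)), 0) (2 * (i : ℤ), 0) (μ i)) ∧
    ∀ i j : Fin n, i ≠ j → ∀ v ∈ pts (-(2 * (i : ℤ)), 0) (μ i),
      v ∉ pts (-(2 * (j : ℤ)), 0) (μ j)}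

/-- `Ω* n`: the analogous tuples of small Schröder paths. -/
def OmegaStarSet (n : ℕ) : Set (Fin n → List Pt) :=
  {μ | (∀ i : Fin n, IsSmallPath (-(2 * (i : ℤ)), 0) (2 * (i : ℤ), 0) (μ i)) ∧
    ∀ i j : Fin n, i ≠ j → ∀ v ∈ pts (-(2 * (i : ℤ)), 0) (μ i),
      v ∉ pts (-(2 * (j : ℤ)), 0) (μ j)}

/-- The unit square with lower-left corner `c` lies in the Aztec diamond `Az(n)`,
i.e. all four of its corners `(x,y)` satisfy `|x| + |y| ≤ n + 1`. -/
def aztecCell (n : ℕ) (c : Pt) : Prop :=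
  |c.1| + |c.2| ≤ (n : ℤ) + 1 ∧ |c.1 + 1| + |c.2| ≤ (n : ℤ) + 1 ∧
  |c.1| + |c.2 + 1| ≤ (n : ℤ) + 1 ∧ |c.1 + 1| + |c.2 + 1| ≤ (n : ℤ) + 1

/-- Two unit squares (given by lower-left corners) are edge-adjacent,
so together they form a 1×2 or 2×1 domino. -/
def adjCell (c d : Pt) : Prop :=
  d = (c.1 + 1, c.2) ∨ d = (c.1 - 1, c.2) ∨ d = (c.1, c.2 + 1) ∨ d = (c.1, c.2 - 1)

/-- A domino tiling of `Az(n)`, encoded as the involution matching each cell of the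
diamond with the other cell of its domino (and fixing everything outside). -/
def IsAztecTiling (n : ℕ) (m : Pt → Pt) : Prop :=
  (∀ c, aztecCell n c → aztecCell n (m c) ∧ adjCell c (m c) ∧ m (m c) = c) ∧
  ∀ c, ¬ aztecCell n c → m c = c

/-- The number of domino tilings of the Aztec diamond of order `n`. -/
noncomputable def aztecTilingCount (n : ℕ) : ℕ := Nat.card {m : Pt → Pt // IsAztecTiling n m}

/-- The map sending `(π₁,…,π_{n-1})` to `(μ₀,…,μ_{n-1})` with `μ₀` the empty path
at the origin and `μᵢ = U πᵢ D`. -/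
def extendStar {n : ℕ} (π : Fin (n - 1) → List Pt) (i : Fin n) : List Pt :=
  if h : (i : ℕ) = 0 then []
  else (1, 1) :: π ⟨(i : ℕ) - 1, by omega⟩ ++ [(1, -1)]

/-!
Raising a large Schröder path by `UU … DD` lifts it to height `≥ 2`, so the result is a small
path whose only vertices at height `≤ 1` are its four *foot points*: the two endpoints and the
vertices after the first and before the last step. Foot points of different paths are distinct
and lie below all lifted vertices, so adding `ω₁ = UD` sends `Π_{n-1}` into `Ω_n`.

Conversely, a small path from the axis to the axis begins with `U` and ends with `D`, so `ω_i`
visits all its foot points. Any other vertex of `ω_i` at height `≤ 1` would, by parity, be a foot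
point of an inner path `ω_j`, which is excluded. Hence the second and penultimate steps of `ω_i`
are `U` and `D` as well and the path in between never comes below height `2`: lowered by two it
is `π_{i-1}`.
-/

def IsStep (s : Pt) : Prop := s = (1, 1) ∨ s = (1, -1) ∨ s = (2, 0)

def NoLevelOnAxis (p : Pt) (l : List Pt) : Prop :=
  ∀ (i : ℕ) (h : i < l.length), l.get ⟨i, h⟩ = (2, 0) → (endpt p (l.take i)).2 ≠ 0

def arch (m : List Pt) : List Pt := (1, 1) :: (m ++ [(1, -1)])

def unarch (l : List Pt) : List Pt := l.tail.dropLast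

section Paths

variable {p q v w s : Pt} {l l₁ l₂ m : List Pt}

lemma isStep_iff :
    IsStep s ↔ s.1 = 1 ∧ s.2 = 1 ∨ s.1 = 1 ∧ s.2 = -1 ∨ s.1 = 2 ∧ s.2 = 0 := by
  simp [IsStep, Prod.ext_iff]

@[simp] lemma pts_nil : pts p [] = [p] := rfl

@[simp] lemma pts_cons : pts p (s :: l) = p :: pts (p + s) l := by
  simp [pts, List.scanl_cons]

@[simp] lemma endpt_nil : endpt p [] = p := rfl

@[simp] lemma endpt_cons : endpt p (s :: l) = endpt (p + s) l := rfl

@[simp] lemma endpt_append : endpt p (l₁ ++ l₂) = endpt (endpt p l₁) l₂ :=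
  List.foldl_append

lemma start_mem_pts : p ∈ pts p l := by
  cases l <;> simp

lemma endpt_mem_pts : endpt p l ∈ pts p l := by
  induction l generalizing p with
  | nil => simp
  | cons s l ih => simp [ih]

lemma mem_pts_append :
    v ∈ pts p (l₁ ++ l₂) ↔ v ∈ pts p l₁ ∨ v ∈ pts (endpt p l₁) l₂ := by
  induction l₁ generalizing p with
  | nil => simpa using fun h => h ▸ start_mem_pts
  | cons s l ih => simp [ih, or_assoc]

lemma mem_pts_add : v ∈ pts (p + w) l ↔ v - w ∈ pts p l := by
  induction l generalizing p with
  | nil => simp [sub_eq_iff_eq_add]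
  | cons s l ih => simp [add_right_comm p w s, ih, sub_eq_iff_eq_add]

lemma endpt_add : endpt (p + w) l = endpt p l + w := by
  induction l generalizing p with
  | nil => rfl
  | cons s l ih => simp [add_right_comm p w s, ih]

lemma mem_pts_arch : v ∈ pts p (arch m) ↔ v = p ∨ v ∈ pts (p + (1, 1)) m ∨
    v = endpt (p + (1, 1)) m + (1, -1) := by
  simp only [arch, mem_pts_append, pts_cons, pts_nil, List.mem_cons, List.mem_nil_iff, or_false]
  refine ⟨fun h => ?_, by tauto⟩
  rcases h with h | h | rfl | h
  exacts [.inl h, .inr (.inl h), .inr (.inl endpt_mem_pts), .inr (.inr h)]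

lemma endpt_arch : endpt p (arch m) = endpt (p + (1, 1)) m + (1, -1) := by
  simp [arch]

@[simp] lemma unarch_arch : unarch (arch m) = m := by
  simp [unarch, arch]

lemma add_mem_pts_arch_arch {a : ℤ} (hv : v ∈ pts (a, 0) m) :
    v + (0, 2) ∈ pts (a - 2, 0) (arch (arch m)) := by
  have hp : ((a - 2, 0) : Pt) + (1, 1) + (1, 1) = (a, 0) + (0, 2) := by simp; ring
  rw [mem_pts_arch, mem_pts_arch, hp, mem_pts_add, add_sub_cancel_right]
  exact .inr (.inl (.inr (.inl hv)))

lemma fst_le_of_mem_pts (hl : ∀ s ∈ l, IsStep s) (hv : v ∈ pts p l) :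
    p.1 ≤ v.1 ∧ v.1 ≤ (endpt p l).1 := by
  induction l generalizing p v with
  | nil => simp_all
  | cons s l ih =>
    simp only [List.forall_mem_cons] at hl
    have hs : 1 ≤ s.1 := by rcases hl.1 with rfl | rfl | rfl <;> simp
    have hstart := ih hl.2 (start_mem_pts (p := p + s))
    simp only [pts_cons, List.mem_cons] at hv
    rcases hv with rfl | hv
    · simp only [endpt_cons, Prod.fst_add] at hstart ⊢; omega
    · have := ih hl.2 hv
      simp only [endpt_cons, Prod.fst_add] at this hstart ⊢; omega

lemma parity_of_mem_pts (hl : ∀ s ∈ l, IsStep s) (hv : v ∈ pts p l) :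
    (v.1 + v.2) % 2 = (p.1 + p.2) % 2 := by
  induction l generalizing p v with
  | nil => simp_all
  | cons s l ih =>
    simp only [List.forall_mem_cons] at hl
    simp only [pts_cons, List.mem_cons] at hv
    rcases hv with rfl | hv
    · rfl
    · rw [ih hl.2 hv]
      rcases hl.1 with rfl | rfl | rfl <;> simp <;> omega

lemma eq_nil_of_endpt_fst (hl : ∀ s ∈ l, IsStep s) (h : (endpt p l).1 = p.1) : l = [] := by
  cases l with
  | nil => rfl
  | cons s r =>
    have hs : 1 ≤ s.1 := by rcases hl s (by simp) with rfl | rfl | rfl <;> simp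
    have := (fst_le_of_mem_pts (l := r) (fun t ht => hl t (by simp [ht]))
      (start_mem_pts (p := p + s))).2
    simp only [endpt_cons, Prod.fst_add] at h this
    omega

end Paths

section LargeAndSmall

variable {p q v w s : Pt} {l l₁ l₂ m : List Pt}

lemma IsLargePath.snd_nonneg (h : IsLargePath p q l) (hv : v ∈ pts p l) : 0 ≤ v.2 :=
  h.2.1 v hv

lemma isLargePath_nil : IsLargePath p q [] ↔ 0 ≤ p.2 ∧ p = q := by
  simp [IsLargePath]

lemma isLargePath_cons :
    IsLargePath p q (s :: l) ↔ IsStep s ∧ 0 ≤ p.2 ∧ IsLargePath (p + s) q l := by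
  simp only [IsLargePath, IsStep, pts_cons, List.mem_cons, forall_eq_or_imp, endpt_cons]
  tauto

lemma isLargePath_append :
    IsLargePath p q (l₁ ++ l₂) ↔
      IsLargePath p (endpt p l₁) l₁ ∧ IsLargePath (endpt p l₁) q l₂ := by
  simp only [IsLargePath, List.forall_mem_append, mem_pts_append, or_imp, forall_and,
    endpt_append]
  tauto

lemma isLargePath_arch :
    IsLargePath p q (arch m) ↔
      0 ≤ p.2 ∧ 0 ≤ q.2 ∧ IsLargePath (p + (1, 1)) (q - (1, -1)) m := by
  simp only [arch, isLargePath_cons, isLargePath_append, isLargePath_nil]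
  constructor
  · rintro ⟨-, hp, hm, -, -, hq, rfl⟩
    exact ⟨hp, hq, by rwa [add_sub_cancel_right]⟩
  · rintro ⟨hp, hq, hm⟩
    have he : endpt (p + (1, 1)) m = q - (1, -1) := hm.2.2
    refine ⟨.inl rfl, hp, he ▸ hm, .inr (.inl rfl), hm.snd_nonneg endpt_mem_pts, ?_, ?_⟩ <;>
      rw [he, sub_add_cancel]
    exact hq

lemma IsLargePath.shift (h : IsLargePath p q l) (hw : ∀ v ∈ pts p l, 0 ≤ v.2 + w.2) :
    IsLargePath (p + w) (q + w) l :=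
  ⟨h.1, fun v hv => by simpa using hw _ (mem_pts_add.1 hv), by rw [endpt_add, h.2.2]⟩

lemma noLevelOnAxis_nil : NoLevelOnAxis p [] := by
  simp [NoLevelOnAxis]

lemma noLevelOnAxis_cons :
    NoLevelOnAxis p (s :: l) ↔ (s = (2, 0) → p.2 ≠ 0) ∧ NoLevelOnAxis (p + s) l := by
  refine ⟨fun h => ⟨by simpa using h 0, fun i hi => ?_⟩, ?_⟩
  · simpa using h (i + 1) (by simpa using hi)
  · rintro ⟨hs, hl⟩ (_ | i) hi
    · simpa using hs
    · simpa using hl i (by simpa using hi)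

lemma noLevelOnAxis_append :
    NoLevelOnAxis p (l₁ ++ l₂) ↔
      NoLevelOnAxis p l₁ ∧ NoLevelOnAxis (endpt p l₁) l₂ := by
  induction l₁ generalizing p with
  | nil => simp [noLevelOnAxis_nil]
  | cons s l ih => simp [noLevelOnAxis_cons, ih, and_assoc]

lemma noLevelOnAxis_of_pos (h : ∀ v ∈ pts p l, 0 < v.2) : NoLevelOnAxis p l := by
  induction l generalizing p with
  | nil => exact noLevelOnAxis_nil
  | cons s l ih =>
    simp only [pts_cons, List.mem_cons, forall_eq_or_imp] at h
    exact noLevelOnAxis_cons.2 ⟨fun _ => h.1.ne', ih h.2⟩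

lemma noLevelOnAxis_arch : NoLevelOnAxis p (arch m) ↔ NoLevelOnAxis (p + (1, 1)) m := by
  simp [arch, noLevelOnAxis_cons, noLevelOnAxis_append, noLevelOnAxis_nil]

lemma isSmallPath_arch :
    IsSmallPath p q (arch m) ↔
      0 ≤ p.2 ∧ 0 ≤ q.2 ∧ IsSmallPath (p + (1, 1)) (q - (1, -1)) m := by
  change (IsLargePath _ _ _ ∧ NoLevelOnAxis _ _) ↔
    _ ∧ _ ∧ (IsLargePath _ _ _ ∧ NoLevelOnAxis _ _)
  rw [isLargePath_arch, noLevelOnAxis_arch, and_assoc, and_assoc]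

lemma IsLargePath.isSmallPath_of_pos (h : IsLargePath p q l) (hpos : ∀ v ∈ pts p l, 0 < v.2) :
    IsSmallPath p q l :=
  ⟨h, noLevelOnAxis_of_pos hpos⟩

end LargeAndSmall

def IsFootPt (a c : ℤ) (v : Pt) : Prop :=
  v = (a, 0) ∨ v = (a + 1, 1) ∨ v = (c - 1, 1) ∨ v = (c, 0)

section Arch

variable {a c : ℤ} {v : Pt} {l : List Pt}

lemma List.exists_eq_arch (hne : l ≠ []) (hfirst : ∀ s r, l = s :: r → s = (1, 1))
    (hlast : ∀ r s, l = r ++ [s] → s = (1, -1)) : ∃ m, l = arch m := by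
  obtain ⟨s, r, rfl⟩ := List.exists_cons_of_ne_nil hne
  obtain rfl := hfirst s r rfl
  rcases List.eq_nil_or_concat' r with rfl | ⟨m, t, rfl⟩
  · simpa using hlast [] (1, 1) rfl
  · obtain rfl := hlast ((1, 1) :: m) t rfl
    exact ⟨m, rfl⟩

lemma IsSmallPath.exists_eq_arch (h : IsSmallPath (a, 0) (c, 0) l) (hac : a ≠ c) :
    ∃ m, l = arch m ∧ IsSmallPath (a + 1, 1) (c - 1, 1) m := by
  have hne : l ≠ [] := by
    rintro rfl
    exact hac (by simpa using (isLargePath_nil.1 h.1).2)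
  have hfirst : ∀ s r, l = s :: r → s = (1, 1) := by
    rintro s r rfl
    obtain ⟨hs, -, hr⟩ := isLargePath_cons.1 h.1
    have hflat := (noLevelOnAxis_cons.1 h.2).1
    have hnonneg := hr.snd_nonneg start_mem_pts
    rw [isStep_iff] at hs
    simp only [Prod.ext_iff, Prod.snd_add] at hflat hnonneg ⊢
    omega
  have hlast : ∀ r s, l = r ++ [s] → s = (1, -1) := by
    rintro r s rfl
    obtain ⟨hs, hnonneg, hend⟩ := isLargePath_cons.1 (isLargePath_append.1 h.1).2
    have hflat := (noLevelOnAxis_cons.1 (noLevelOnAxis_append.1 h.2).2).1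
    have hend := (isLargePath_nil.1 hend).2
    rw [isStep_iff] at hs
    simp only [Prod.ext_iff, Prod.snd_add] at hflat hend ⊢
    omega
  obtain ⟨m, rfl⟩ := List.exists_eq_arch hne hfirst hlast
  obtain ⟨-, -, hm⟩ := isSmallPath_arch.1 h
  exact ⟨m, rfl, by simpa using hm⟩

lemma IsSmallPath.mem_pts_of_isFootPt (h : IsSmallPath (a, 0) (c, 0) l) (hac : a ≠ c)
    (hv : IsFootPt a c v) : v ∈ pts (a, 0) l := by
  obtain ⟨m, rfl, hm⟩ := h.exists_eq_arch hac
  have hend : endpt (a + 1, 1) m = (c - 1, 1) := hm.1.2.2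
  rw [mem_pts_arch]
  rcases hv with rfl | rfl | rfl | rfl
  · exact .inl rfl
  · exact .inr (.inl (by simpa using start_mem_pts))
  · exact .inr (.inl (by simpa [hend] using endpt_mem_pts (p := (a + 1, 1)) (l := m)))
  · exact .inr (.inr (by simp [hend]))

lemma IsLargePath.exists_eq_arch_of_low_outside (h : IsLargePath (a, 1) (c, 1) l) (hac : a + 2 < c)
    (hlow : ∀ v ∈ pts (a, 1) l, v.2 ≤ 1 → v.1 ≤ a ∨ c ≤ v.1) :
    ∃ m, l = arch m ∧ IsLargePath (a + 1, 0) (c - 1, 0) m := by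
  have hne : l ≠ [] := by
    rintro rfl
    have := (isLargePath_nil.1 h).2
    simp only [Prod.ext_iff] at this
    omega
  have hfirst : ∀ s r, l = s :: r → s = (1, 1) := by
    rintro s r rfl
    have hs := (isLargePath_cons.1 h).1
    have hnext := hlow ((a, 1) + s) (by simp [start_mem_pts])
    rw [isStep_iff] at hs
    simp only [Prod.ext_iff, Prod.fst_add, Prod.snd_add] at hnext ⊢
    omega
  have hlast : ∀ r s, l = r ++ [s] → s = (1, -1) := by
    rintro r s rfl
    obtain ⟨hs, -, hend⟩ := isLargePath_cons.1 (isLargePath_append.1 h).2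
    have hend := (isLargePath_nil.1 hend).2
    have hprev := hlow _ (mem_pts_append.2 (.inl endpt_mem_pts))
    rw [isStep_iff] at hs
    simp only [Prod.ext_iff, Prod.fst_add, Prod.snd_add] at hend hprev ⊢
    omega
  obtain ⟨m, rfl⟩ := List.exists_eq_arch hne hfirst hlast
  obtain ⟨-, -, hm⟩ := isLargePath_arch.1 h
  norm_num at hm
  have hhigh : ∀ v ∈ pts (a + 1, 2) m, 2 ≤ v.2 := fun v hv => by
    have hx := fst_le_of_mem_pts hm.1 hv
    rw [hm.2.2] at hx
    have hy := hm.snd_nonneg hv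
    have hlow' := hlow v (mem_pts_arch.2 (.inr (.inl (by simpa using hv))))
    simp only at hx
    omega
  refine ⟨m, rfl, ?_⟩
  convert hm.shift (w := (0, -2)) fun v hv => by dsimp only; linarith [hhigh v hv]
    using 1 <;> simp

end Arch

section Lift

variable {a c : ℤ} {v : Pt} {m : List Pt}

lemma IsLargePath.isSmallPath_arch_arch (h : IsLargePath (a, 0) (c, 0) m) :
    IsSmallPath (a - 2, 0) (c + 2, 0) (arch (arch m)) := by
  have hlift : IsLargePath (a, 2) (c, 2) m := by
    simpa using h.shift (w := (0, 2)) fun v hv => by simpa using (h.snd_nonneg hv).trans (by simp)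
  have hpos : ∀ v ∈ pts (a, 2) m, 0 < v.2 := fun v hv => by
    have := h.snd_nonneg ((mem_pts_add (p := (a, 0)) (w := (0, 2))).1 (by simpa using hv))
    simp only [Prod.snd_sub] at this
    omega
  refine isSmallPath_arch.2 ⟨le_rfl, le_rfl, isSmallPath_arch.2 ⟨by simp, by simp, ?_⟩⟩
  convert hlift.isSmallPath_of_pos hpos using 1 <;> simp <;> ring

lemma IsLargePath.mem_pts_arch_arch (h : IsLargePath (a, 0) (c, 0) m)
    (hv : v ∈ pts (a - 2, 0) (arch (arch m))) :
    v - (0, 2) ∈ pts (a, 0) m ∨ IsFootPt (a - 2) (c + 2) v := by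
  have hp : ((a - 2, 0) : Pt) + (1, 1) + (1, 1) = (a, 0) + (0, 2) := by simp; ring
  rw [mem_pts_arch, mem_pts_arch, endpt_arch, hp, mem_pts_add, endpt_add, h.2.2] at hv
  rcases hv with hv | (hv | hv | hv) | hv
  · exact .inr (.inl hv)
  · exact .inr (.inr (.inl (by simp [hv])))
  · exact .inl hv
  · exact .inr (.inr (.inr (.inl (by simp [hv]; ring))))
  · exact .inr (.inr (.inr (.inr (by simp [hv]; ring))))

end Lift

lemma left_end_succ {k : ℕ} (j : Fin k) :
    ((-(2 * ((j.succ : ℕ) : ℤ) + 1), 0) : Pt) = (-(2 * (j : ℤ) + 1) - 2, 0) := by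
  simp only [Fin.val_succ, Nat.cast_succ, Prod.mk.injEq, and_true]
  ring

lemma right_end_succ {k : ℕ} (j : Fin k) :
    ((2 * ((j.succ : ℕ) : ℤ) + 1, 0) : Pt) = (2 * (j : ℤ) + 1 + 2, 0) := by
  simp only [Fin.val_succ, Nat.cast_succ, Prod.mk.injEq, and_true]
  ring

namespace OmegaSet

variable {n k : ℕ} {v : Pt}

lemma fst_le_or_ge_of_snd_le_one {ω : Fin n → List Pt} (hω : ω ∈ OmegaSet n) (i : Fin n)
    (hv : v ∈ pts (-(2 * (i : ℤ) + 1), 0) (ω i)) (hv2 : v.2 ≤ 1) :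
    v.1 ≤ -(2 * i) ∨ 2 * i ≤ v.1 := by
  have hi := (hω.1 i).1
  have hx := fst_le_of_mem_pts hi.1 hv
  have hpar := parity_of_mem_pts hi.1 hv
  have hy := hi.snd_nonneg hv
  rw [hi.2.2] at hx
  simp only at hx hpar
  by_contra! hin
  -- by parity, `v` is a foot point of the inner path `ω j`
  let j : Fin n := ⟨v.1.natAbs / 2, by omega⟩
  have hji : i ≠ j := fun h => by simp only [Fin.ext_iff, j] at h; omega
  refine hω.2 i j hji v hv ((hω.1 j).mem_pts_of_isFootPt (by omega) ?_)
  simp only [IsFootPt, Prod.ext_iff, j]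
  omega

lemma eq_arch_nil {ω : Fin (k + 1) → List Pt} (hω : ω ∈ OmegaSet (k + 1)) :
    ω 0 = arch [] := by
  have h0 : IsSmallPath (-1, 0) (1, 0) (ω 0) := by simpa using hω.1 0
  obtain ⟨m, hm, hsmall⟩ := h0.exists_eq_arch (by norm_num)
  rw [hm, eq_nil_of_endpt_fst hsmall.1.1 (by simpa using congrArg Prod.fst hsmall.1.2.2)]

lemma exists_eq_arch_arch {ω : Fin (k + 1) → List Pt} (hω : ω ∈ OmegaSet (k + 1))
    (j : Fin k) :
    ∃ m, ω j.succ = arch (arch m) ∧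
      IsLargePath (-(2 * (j : ℤ) + 1), 0) (2 * j + 1, 0) m := by
  have hj := hω.1 j.succ
  rw [left_end_succ, right_end_succ] at hj
  obtain ⟨r, hr, hsmall⟩ := hj.exists_eq_arch (by omega)
  have hlow : ∀ v ∈ pts (-(2 * (j : ℤ) + 1) - 2 + 1, 1) r, v.2 ≤ 1 →
      v.1 ≤ -(2 * (j : ℤ) + 1) - 2 + 1 ∨ 2 * j + 1 + 2 - 1 ≤ v.1 := fun v hv hv2 => by
    have hv' : v ∈ pts (-(2 * ((j.succ : ℕ) : ℤ) + 1), 0) (ω j.succ) := by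
      rw [left_end_succ, hr, mem_pts_arch]
      exact .inr (.inl (by simpa using hv))
    have := fst_le_or_ge_of_snd_le_one hω j.succ hv' hv2
    simp only [Fin.val_succ, Nat.cast_succ] at this
    omega
  obtain ⟨m, rfl, hm⟩ := hsmall.1.exists_eq_arch_of_low_outside (by omega) hlow
  exact ⟨m, hr, by convert hm using 2 <;> ring⟩

end OmegaSet

section Bijection

variable {k : ℕ} {π : Fin k → List Pt} {ω : Fin (k + 1) → List Pt} {v : Pt}

def toOmega (π : Fin k → List Pt) : Fin (k + 1) → List Pt :=
  Fin.cons (arch []) fun j => arch (arch (π j))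

def toPi (ω : Fin (k + 1) → List Pt) : Fin k → List Pt :=
  fun j => unarch (unarch (ω j.succ))

lemma toPi_toOmega (π : Fin k → List Pt) : toPi (toOmega π) = π := by
  funext j
  simp [toPi, toOmega]

lemma toOmega_toPi (hω : ω ∈ OmegaSet (k + 1)) : toOmega (toPi ω) = ω := by
  funext i
  cases i using Fin.cases with
  | zero => simp [toOmega, OmegaSet.eq_arch_nil hω]
  | succ j =>
    obtain ⟨m, hm, -⟩ := OmegaSet.exists_eq_arch_arch hω j
    simp [toOmega, toPi, hm]

lemma mem_pts_toOmega (hπ : π ∈ PiSet k) (i : Fin (k + 1))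
    (hv : v ∈ pts (-(2 * (i : ℤ) + 1), 0) (toOmega π i)) :
    IsFootPt (-(2 * (i : ℤ) + 1)) (2 * i + 1) v ∨
      ∃ j : Fin k, i = j.succ ∧ v - (0, 2) ∈ pts (-(2 * (j : ℤ) + 1), 0) (π j) := by
  cases i using Fin.cases with
  | zero =>
    left
    simp only [toOmega, arch, Fin.cons_zero, List.nil_append, pts_cons, pts_nil, List.mem_cons,
      List.not_mem_nil, or_false] at hv
    rcases hv with rfl | rfl | rfl <;> simp [IsFootPt]
  | succ j =>
    simp only [toOmega, Fin.cons_succ, left_end_succ] at hv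
    rcases (hπ.1 j).mem_pts_arch_arch hv with h | h
    · exact .inr ⟨j, rfl, h⟩
    · left
      convert h using 1 <;> simp <;> ring

lemma toOmega_mem (hπ : π ∈ PiSet k) : toOmega π ∈ OmegaSet (k + 1) := by
  refine ⟨fun i => ?_, fun i i' hii' v hv hv' => ?_⟩
  · cases i using Fin.cases with
    | zero =>
      simpa [toOmega] using isSmallPath_arch.2
        ⟨le_rfl, le_rfl, isLargePath_nil.2 ⟨zero_le_one, by simp⟩, noLevelOnAxis_nil⟩
    | succ j =>
      rw [left_end_succ, right_end_succ]
      exact (hπ.1 j).isSmallPath_arch_arch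
  · rcases mem_pts_toOmega hπ i hv with hf | ⟨j, rfl, hj⟩ <;>
      rcases mem_pts_toOmega hπ i' hv' with hf' | ⟨j', rfl, hj'⟩
    · apply hii'
      ext
      simp only [IsFootPt, Prod.ext_iff] at hf hf'
      omega
    · have := (hπ.1 j').snd_nonneg hj'
      simp only [IsFootPt, Prod.ext_iff] at hf
      simp only [Prod.snd_sub] at this
      omega
    · have := (hπ.1 j).snd_nonneg hj
      simp only [IsFootPt, Prod.ext_iff] at hf'
      simp only [Prod.snd_sub] at this
      omega
    · exact hπ.2 j j' (fun h => hii' (h ▸ rfl)) _ hj hj'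

lemma toPi_mem (hω : ω ∈ OmegaSet (k + 1)) : toPi ω ∈ PiSet k := by
  refine ⟨fun j => ?_, fun j j' hjj' v hv hv' => ?_⟩
  · obtain ⟨m, hm, hlarge⟩ := OmegaSet.exists_eq_arch_arch hω j
    simpa [toPi, hm] using hlarge
  · obtain ⟨m, hm, -⟩ := OmegaSet.exists_eq_arch_arch hω j
    obtain ⟨m', hm', -⟩ := OmegaSet.exists_eq_arch_arch hω j'
    simp only [toPi, hm, hm', unarch_arch] at hv hv'
    have hlift := add_mem_pts_arch_arch hv
    have hlift' := add_mem_pts_arch_arch hv'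
    rw [← hm, ← left_end_succ] at hlift
    rw [← hm', ← left_end_succ] at hlift'
    exact hω.2 j.succ j'.succ (Fin.succ_injective _ |>.ne hjj') _ hlift hlift'

def piSetEquivOmegaSet (k : ℕ) : PiSet k ≃ OmegaSet (k + 1) where
  toFun π := ⟨toOmega π, toOmega_mem π.2⟩
  invFun ω := ⟨toPi ω, toPi_mem ω.2⟩
  left_inv π := Subtype.ext (toPi_toOmega π.1)
  right_inv ω := Subtype.ext (toOmega_toPi ω.2)

end Bijection

/-- For `n ≥ 2`, there is a bijection between `Π_{n-1}` and `Ω_n`;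
in particular `|Π_{n-1}| = |Ω_n|`. -/
theorem pi_equiv_omega (n : ℕ) (hn : 2 ≤ n) :
    Nonempty (↥(PiSet (n - 1)) ≃ ↥(OmegaSet n)) ∧
      Nat.card ↥(PiSet (n - 1)) = Nat.card ↥(OmegaSet n) := by
  obtain ⟨k, rfl⟩ : ∃ k, n = k + 1 := ⟨n - 1, by omega⟩
  exact ⟨⟨piSetEquivOmegaSet k⟩, Nat.card_congr (piSetEquivOmegaSet k)⟩
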